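/- The family 𝒥 of unions of two adjacent triadic intervals of equal length splits into two triadic lattices: 𝒥 = 𝒯¹ ∪ 𝒯², where each 𝒯^i is a collection of half-open intervals of lengths 2·3^j (j ∈ ℤ) such that any two members are nested or disjoint and each member of length 2·3^{j+1} contains exactly three members of length 2·3^j partitioning it. -/

import Mathlib

open MeasureTheory ENNReal

/-- A triadic lattice on `ℝ`: a collection of half-open intervals such that any two
members are nested or disjoint, each member is partitioned into its three thirds (its
children), which again belong to the lattice, and each member has a parent in the
lattice of three times its length. -/
structure IsTriadicLattice (𝔗 : Set (Set ℝ)) : Prop where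
  shape : ∀ I ∈ 𝔗, ∃ a b : ℝ, a < b ∧ I = Set.Ico a b
  nested_or_disjoint : ∀ I ∈ 𝔗, ∀ J ∈ 𝔗, I ⊆ J ∨ J ⊆ I ∨ Disjoint I J
  children : ∀ a b : ℝ, Set.Ico a b ∈ 𝔗 →
    Set.Ico a (a + (b - a)/3) ∈ 𝔗 ∧
    Set.Ico (a + (b - a)/3) (a + 2*(b - a)/3) ∈ 𝔗 ∧
    Set.Ico (a + 2*(b - a)/3) b ∈ 𝔗
  parent : ∀ a b : ℝ, Set.Ico a b ∈ 𝔗 →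
    ∃ c d : ℝ, Set.Ico c d ∈ 𝔗 ∧ Set.Ico a b ⊆ Set.Ico c d ∧ d - c = 3*(b - a)

/-- The maximal operator associated to a family `𝔗` of intervals:
`M^𝔗 f(x) = sup_{J ∈ 𝔗, J ∋ x} (1/|J|)∫_J |f|`. -/
noncomputable def maxOpT (𝔗 : Set (Set ℝ)) (f : ℝ → ℝ) (x : ℝ) : ℝ≥0∞ :=
  ⨆ (J : Set ℝ) (_ : J ∈ 𝔗) (_ : x ∈ J),
    (∫⁻ y in J, ENNReal.ofReal |f y|) / volume J

/-- The family `𝒥` of unions of two adjacent triadic intervals of equal length. -/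
def familyJ : Set (Set ℝ) :=
  {S | ∃ j n : ℤ, S = Set.Ico ((3:ℝ)^j * n) ((3:ℝ)^j * (n + 2))}

/-!
Take `𝒯¹`, `𝒯²` to be the intervals `[3^j n, 3^j (n+2))` with `n` even, resp. odd. Since `3` is
odd, passing to a finer scale `3^j ↦ 3^(j-d)` multiplies the index `n` by the odd number `3^d`
and so preserves its parity: the children of `[3^j n, 3^j (n+2))` have indices `3n, 3n+2, 3n+4`,
a parent index `m ≡ n` with `3m ≤ n ≤ 3m+4` always exists, and two members of one family, seen
at the finer of their scales, become integer intervals `[N, N+2·3^d)` and `[n', n'+2)` with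
`N ≡ n' (mod 2)`, which are nested or disjoint.
-/

/-- Two integer intervals `[N, N + M)` and `[n, n + 2)` whose left endpoints have the same
parity, with `M` even, are nested or disjoint. -/
lemma Int.nested_or_disjoint_of_two_dvd {N M n : ℤ} (hM : 2 ∣ M) (hn : 2 ∣ n - N) :
    (N ≤ n ∧ n + 2 ≤ N + M) ∨ n + 2 ≤ N ∨ N + M ≤ n := by
  omega

lemma Ico_mul_intCast_subset {c : ℝ} (hc : 0 ≤ c) {a b a' b' : ℤ} (ha : a ≤ a') (hb : b' ≤ b) :
    Set.Ico (c * a') (c * b') ⊆ Set.Ico (c * a) (c * b) :=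
  Set.Ico_subset_Ico (by gcongr) (by gcongr)

lemma Ico_mul_intCast_disjoint {c : ℝ} (hc : 0 ≤ c) {a b a' b' : ℤ} (h : b ≤ a') :
    Disjoint (Set.Ico (c * a) (c * b)) (Set.Ico (c * a') (c * b')) :=
  Set.Ico_disjoint_Ico.mpr <|
    (min_le_left _ _).trans ((by gcongr : c * b ≤ c * a').trans (le_max_right _ _))

namespace TriadicSplit

def pairIco (j n : ℤ) : Set ℝ := Set.Ico (3 ^ j * n) (3 ^ j * ((n : ℝ) + 2))

lemma pairIco_left_lt_right (j n : ℤ) : (3 : ℝ) ^ j * n < 3 ^ j * ((n : ℝ) + 2) := by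
  have := zpow_pos (by norm_num : (0 : ℝ) < 3) j
  nlinarith

lemma Ico_eq_pairIco_iff {a b : ℝ} {j n : ℤ} :
    Set.Ico a b = pairIco j n ↔ a = 3 ^ j * n ∧ b = 3 ^ j * ((n : ℝ) + 2) :=
  Set.Ico_eq_Ico_iff (Or.inr (pairIco_left_lt_right j n))

lemma pairIco_injective {j n j' n' : ℤ} (h : pairIco j n = pairIco j' n') : j = j' ∧ n = n' := by
  obtain ⟨hl, hr⟩ := Ico_eq_pairIco_iff.mp h
  have hpow : (3 : ℝ) ^ j = 3 ^ j' := by linear_combination (hr - hl) / 2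
  obtain rfl := zpow_right_injective₀ (by norm_num : (0 : ℝ) < 3) (by norm_num) hpow
  refine ⟨rfl, ?_⟩
  exact_mod_cast mul_left_cancel₀ (zpow_pos (by norm_num : (0 : ℝ) < 3) j).ne' hl

lemma pairIco_add_natCast (j : ℤ) (d : ℕ) (n : ℤ) :
    pairIco (j + d) n =
      Set.Ico (3 ^ j * ((3 ^ d * n : ℤ) : ℝ)) (3 ^ j * ((3 ^ d * n + 2 * 3 ^ d : ℤ) : ℝ)) := by
  rw [pairIco, zpow_add₀ (by norm_num : (3 : ℝ) ≠ 0), zpow_natCast]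
  push_cast
  ring_nf

lemma pairIco_eq_Ico_intCast (j n : ℤ) :
    pairIco j n = Set.Ico (3 ^ j * (n : ℝ)) (3 ^ j * ((n + 2 : ℤ) : ℝ)) := by
  rw [pairIco]; push_cast; rfl

lemma pairIco_subset_pairIco_add_one {j n m : ℤ} (hl : 3 * m ≤ n) (hr : n ≤ 3 * m + 4) :
    pairIco j n ⊆ pairIco (j + 1) m := by
  rw [show j + 1 = j + ((1 : ℕ) : ℤ) by simp, pairIco_add_natCast, pairIco_eq_Ico_intCast]
  exact Ico_mul_intCast_subset (zpow_pos (by norm_num) j).le (by simpa using hl) (by omega)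

lemma pairIco_subset_or_disjoint {j j' n n' : ℤ} (hle : j' ≤ j) (hpar : n ≡ n' [ZMOD 2]) :
    pairIco j' n' ⊆ pairIco j n ∨ Disjoint (pairIco j n) (pairIco j' n') := by
  obtain ⟨d, rfl⟩ := Int.exists_add_of_le hle
  have hc : (0 : ℝ) ≤ 3 ^ j' := (zpow_pos (by norm_num) j').le
  have hscale : 3 ^ d * n ≡ n' [ZMOD 2] :=
    calc 3 ^ d * n ≡ 1 ^ d * n [ZMOD 2] := ((show (3 : ℤ) ≡ 1 [ZMOD 2] by decide).pow d).mul_right n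
      _ = n := by simp
      _ ≡ n' [ZMOD 2] := hpar
  rw [pairIco_add_natCast, pairIco_eq_Ico_intCast]
  rcases Int.nested_or_disjoint_of_two_dvd (M := 2 * 3 ^ d) (dvd_mul_right 2 _) hscale.dvd with
    ⟨hl, hr⟩ | hr | hl
  · exact Or.inl (Ico_mul_intCast_subset hc hl (by omega))
  · exact Or.inr (Ico_mul_intCast_disjoint hc hr).symm
  · exact Or.inr (Ico_mul_intCast_disjoint hc (by omega))

lemma Ico_thirds_eq_pairIco {a b : ℝ} {j n : ℤ} (h : Set.Ico a b = pairIco (j + 1) n) :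
    Set.Ico a (a + (b - a) / 3) = pairIco j (3 * n) ∧
    Set.Ico (a + (b - a) / 3) (a + 2 * (b - a) / 3) = pairIco j (3 * n + 2) ∧
    Set.Ico (a + 2 * (b - a) / 3) b = pairIco j (3 * n + 4) := by
  obtain ⟨rfl, rfl⟩ := Ico_eq_pairIco_iff.mp h
  rw [zpow_add_one₀ (by norm_num : (3 : ℝ) ≠ 0)]
  refine ⟨?_, ?_, ?_⟩ <;> (rw [pairIco]; congr 1 <;> push_cast <;> ring)

/-- `n - 3m = 2s` with `s ≡ 2n (mod 3)`, so `n - 3m ∈ {0, 2, 4}` is even. -/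
lemma exists_parent_index (n : ℤ) : ∃ m : ℤ, 3 * m ≤ n ∧ n ≤ 3 * m + 4 ∧ m ≡ n [ZMOD 2] :=
  ⟨(n - 2 * (2 * n % 3)) / 3, by unfold Int.ModEq; omega⟩

def triLattice (p : ℤ) : Set (Set ℝ) := {S | ∃ j n : ℤ, n ≡ p [ZMOD 2] ∧ pairIco j n = S}

theorem isTriadicLattice_triLattice (p : ℤ) : IsTriadicLattice (triLattice p) where
  shape := by
    rintro _ ⟨j, n, -, rfl⟩
    exact ⟨_, _, pairIco_left_lt_right j n, rfl⟩
  nested_or_disjoint := by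
    rintro _ ⟨j, n, hn, rfl⟩ _ ⟨j', n', hn', rfl⟩
    rcases le_total j' j with hle | hle
    · rcases pairIco_subset_or_disjoint hle (hn.trans hn'.symm) with h | h
      exacts [Or.inr (Or.inl h), Or.inr (Or.inr h)]
    · rcases pairIco_subset_or_disjoint hle (hn'.trans hn.symm) with h | h
      exacts [Or.inl h, Or.inr (Or.inr h.symm)]
  children := by
    rintro a b ⟨j, n, hn, h⟩
    obtain ⟨j, rfl⟩ : ∃ k, j = k + 1 := ⟨j - 1, by ring⟩
    obtain ⟨h₁, h₂, h₃⟩ := Ico_thirds_eq_pairIco h.symm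
    refine ⟨⟨j, _, ?_, h₁.symm⟩, ⟨j, _, ?_, h₂.symm⟩, ⟨j, _, ?_, h₃.symm⟩⟩ <;>
      unfold Int.ModEq at * <;> omega
  parent := by
    rintro a b ⟨j, n, hn, h⟩
    obtain ⟨m, hl, hr, hm⟩ := exists_parent_index n
    obtain ⟨rfl, rfl⟩ := Ico_eq_pairIco_iff.mp h.symm
    refine ⟨_, _, ⟨j + 1, m, hm.trans hn, rfl⟩, pairIco_subset_pairIco_add_one hl hr, ?_⟩
    rw [zpow_add_one₀ (by norm_num : (3 : ℝ) ≠ 0)]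
    ring

lemma triLattice_zero_union_triLattice_one : triLattice 0 ∪ triLattice 1 = familyJ := by
  ext S
  constructor
  · rintro (⟨j, n, -, rfl⟩ | ⟨j, n, -, rfl⟩) <;> exact ⟨j, n, rfl⟩
  · rintro ⟨j, n, rfl⟩
    rcases Int.emod_two_eq n with h | h
    exacts [Or.inl ⟨j, n, h, rfl⟩, Or.inr ⟨j, n, h, rfl⟩]

lemma disjoint_triLattice_zero_one : Disjoint (triLattice 0) (triLattice 1) := by
  rw [Set.disjoint_left]
  rintro _ ⟨j, n, hn, rfl⟩ ⟨j', n', hn', h⟩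
  obtain ⟨-, rfl⟩ := pairIco_injective h
  unfold Int.ModEq at hn hn'
  omega

end TriadicSplit

/-- `𝒥` splits into two disjoint triadic lattices `𝒯¹`, `𝒯²`. -/
theorem familyJ_splits_into_two_triadic_lattices :
    ∃ T₁ T₂ : Set (Set ℝ), IsTriadicLattice T₁ ∧ IsTriadicLattice T₂ ∧
      T₁ ∪ T₂ = familyJ ∧ Disjoint T₁ T₂ :=
  ⟨_, _, TriadicSplit.isTriadicLattice_triLattice 0, TriadicSplit.isTriadicLattice_triLattice 1,
    TriadicSplit.triLattice_zero_union_triLattice_one, TriadicSplit.disjoint_triLattice_zero_one⟩
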